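/- The function ℱ↑ω, the least upper bound of {ℱ↑n : n ∈ ℕ} with respect to ≤, is the least fixed point of ℱ: ℱ(ℱ↑ω) = ℱ↑ω, and for every f ∈ P with ℱ(f) = f one has ℱ↑ω ≤ f. -/
import Mathlib


open scoped Classical

/-- The order on `P`, the set of total functions from situations (`Set S`) to
situations: `f₁ ≤ f₂` iff for every situation `Σ`, `f₁ Σ ≠ ∅ → f₁ Σ = f₂ Σ`. -/
def ple {S : Type*} (f₁ f₂ : Set S → Set S) : Prop :=
  ∀ Sig : Set S, f₁ Sig ≠ ∅ → f₁ Sig = f₂ Sig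

/-- `f` is a least upper bound of `D ⊆ P` with respect to `ple`. -/
def IsLubP {S : Type*} (D : Set (Set S → Set S)) (f : Set S → Set S) : Prop :=
  (∀ d ∈ D, ple d f) ∧ ∀ g : Set S → Set S, (∀ d ∈ D, ple d g) → ple f g

/-- `D ⊆ P` is directed: every finite subset of `D` has a least upper bound
that exists and belongs to `D`. -/
def DirectedP {S : Type*} (D : Set (Set S → Set S)) : Prop :=
  ∀ F : Set (Set S → Set S), F ⊆ D → F.Finite → ∃ f ∈ D, IsLubP F f

/-- The operator `ℱ_{g,T}` associated with a while loop whose test condition is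
satisfied exactly by the states in `T` and whose body has effect `g`. -/
noncomputable def Fop {S : Type*} (T : Set S) (g : Set S → Set S)
    (f : Set S → Set S) : Set S → Set S := fun Sig =>
  if Sig ∩ T = ∅ then Sig
  else if Sig ≠ ∅ ∧ Sig ⊆ T then f (g Sig)
  else ∅

/-- The powers of `ℱ`: `ℱ↑0 = f_∅` and `ℱ↑(n+1) = ℱ(ℱ↑n)`. -/
noncomputable def Fpow {S : Type*} (T : Set S) (g : Set S → Set S) :
    ℕ → (Set S → Set S)
  | 0 => fun _ => ∅
  | n + 1 => Fop T g (Fpow T g n)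

lemma Fop_mono {S : Type*} (T : Set S) (g : Set S → Set S)
    {f₁ f₂ : Set S → Set S} (h : ple f₁ f₂) : ple (Fop T g f₁) (Fop T g f₂) := by
  intro Sig hne
  by_cases h1 : Sig ∩ T = ∅
  · simp [Fop, h1]
  · by_cases h2 : Sig ≠ ∅ ∧ Sig ⊆ T
    · simp only [Fop, if_neg h1, if_pos h2] at hne ⊢
      exact h _ hne
    · simp only [Fop, if_neg h1, if_neg h2] at hne
      exact absurd rfl hne

/-- `ℱ↑ω`, the least upper bound of `{ℱ↑n : n ∈ ℕ}`, is the least fixed point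
of `ℱ`: `ℱ(ℱ↑ω) = ℱ↑ω` and `ℱ↑ω ≤ f` for every fixed point `f` of `ℱ`. -/
theorem Fpow_omega_lfp {S : Type*} (T : Set S) (g : Set S → Set S)
    (fω : Set S → Set S)
    (hlub : IsLubP {f : Set S → Set S | ∃ n : ℕ, f = Fpow T g n} fω) :
    Fop T g fω = fω ∧ ∀ f : Set S → Set S, Fop T g f = f → ple fω f := by
  have hub : ∀ n : ℕ, ple (Fpow T g n) fω := fun n =>
    hlub.1 _ ⟨n, rfl⟩
  -- key lemma: if fω Sig ≠ ∅ then some power is nonempty (hence equals fω Sig)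
  have key : ∀ Sig : Set S, fω Sig ≠ ∅ → ∃ n, Fpow T g n Sig ≠ ∅ ∧
      Fpow T g n Sig = fω Sig := by
    intro Sig h
    by_contra hc
    have hc' : ∀ n, Fpow T g n Sig = ∅ := by
      intro n
      by_contra hn
      exact hc ⟨n, hn, hub n Sig hn⟩
    have hub' : ∀ d ∈ {f : Set S → Set S | ∃ n : ℕ, f = Fpow T g n}, ple d
        (fun X => if X = Sig then (∅ : Set S) else fω X) := by
      rintro d ⟨n, rfl⟩ X hne
      by_cases e : X = Sig
      · exact absurd (e ▸ hc' n) hne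
      · simp only [if_neg e]
        exact hub n X hne
    have := hlub.2 _ hub' Sig h
    simp only [if_pos rfl] at this
    exact h this
  have hEmpty : fω ∅ = ∅ := by
    by_contra h
    obtain ⟨n, hn, _⟩ := key ∅ h
    apply hn
    induction n with
    | zero => rfl
    | succ m ih => simp [Fpow, Fop]
  constructor
  · funext Sig
    by_cases h1 : Sig ∩ T = ∅
    · simp only [Fop, if_pos h1]
      by_cases hS : Sig = ∅
      · rw [hS, hEmpty]
      · have h1' : Fpow T g 1 Sig = Sig := by simp [Fpow, Fop, if_pos h1]
        have := hub 1 Sig (by rw [h1']; exact hS)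
        rw [h1'] at this
        exact this
    · by_cases h2 : Sig ≠ ∅ ∧ Sig ⊆ T
      · simp only [Fop, if_neg h1, if_pos h2]
        by_cases hg : fω (g Sig) = ∅
        · rw [hg]
          by_contra h
          obtain ⟨n, hn, heq⟩ := key Sig fun hh => h hh.symm
          match n with
          | 0 => exact hn rfl
          | m + 1 =>
            have : Fpow T g (m+1) Sig = Fpow T g m (g Sig) := by
              simp [Fpow, Fop, if_neg h1, if_pos h2]
            rw [this] at hn
            exact hn ((hub m (g Sig) hn).trans hg)
        · obtain ⟨n, hn, heq⟩ := key (g Sig) hg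
          have hstep : Fpow T g (n+1) Sig = Fpow T g n (g Sig) := by
            simp [Fpow, Fop, if_neg h1, if_pos h2]
          have hne : Fpow T g (n+1) Sig ≠ ∅ := by rw [hstep]; exact hn
          have := hub (n+1) Sig hne
          rw [hstep, heq] at this
          exact this
      · simp only [Fop, if_neg h1, if_neg h2]
        by_contra h
        obtain ⟨n, hn, heq⟩ := key Sig fun hh => h hh.symm
        match n with
        | 0 => exact hn rfl
        | m + 1 =>
          apply hn
          simp [Fpow, Fop, if_neg h1, if_neg h2]
  · intro f hf
    apply hlub.2
    rintro d ⟨n, rfl⟩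
    induction n with
    | zero => intro Sig h; exact absurd rfl h
    | succ m ih =>
      have := Fop_mono T g ih
      rw [hf] at this
      exact this
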